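/- Let A be a pre-Lie ring of cardinality p^n for a prime p > 3 and a natural number n, satisfying Property 3, and set c = ⌊(p − 1)/4⌋. Let ρ : p·A → A be a function with p·ρ(x) = x for all x ∈ p·A and ρ(p^i·A) ⊆ p^{i−1}·A for all i ≥ 1 (so that the iterate ρ^j is defined on p^j·A). Write L_a(x) = a·x, L_a^0(x) = x, L_a^{m+1}(x) = a·L_a^m(x). Then for all i, j ≥ 1, a ∈ A and b ∈ p^j·A: L_a^{c·j + i}(ρ^j(b)) = L_a^{c·j}(ρ^j(L_a^i(b))). -/

import Mathlib

/-- A pre-Lie ring: an abelian group with a bi-additive multiplication satisfying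
`(x·y)·z − x·(y·z) = (y·x)·z − y·(x·z)`. -/
class PreLieRing (A : Type*) extends AddCommGroup A where
  mul : A → A → A
  add_mul' : ∀ a b c : A, mul (a + b) c = mul a c + mul b c
  mul_add' : ∀ a b c : A, mul a (b + c) = mul a b + mul a c
  pre_lie : ∀ x y z : A,
    mul (mul x y) z - mul x (mul y z) = mul (mul y x) z - mul y (mul x z)

namespace PreLieRing

variable {A : Type*} [PreLieRing A]

/-- `ann (p^i) = {a : p^i • a = 0}`. -/
def ann (p i : ℕ) : Set A := {a : A | (p ^ i : ℕ) • a = 0}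

/-- `p^i • A = {p^i • a : a ∈ A}`. -/
def pA (p i : ℕ) : Set A := Set.range (fun a : A => (p ^ i : ℕ) • a)

/-- Nested left-normed product `a₁ · (a₂ · (⋯ · (aₘ · b)⋯))`. -/
def nestedMul : List A → A → A
  | [], b => b
  | a :: l, b => mul a (nestedMul l b)

/-- `Lpow a m x = L_a^m(x)`, the `m`-fold left multiplication by `a`. -/
def Lpow (a : A) (m : ℕ) (x : A) : A := (fun y => mul a y)^[m] x

/-- Property 3 (with `c = ⌊(p-1)/4⌋`): products of `c` elements lie in `p·A`, and
products of `c` elements applied to `ann(pⁱ)` lie in `p·ann(pⁱ)`. -/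
def Property3 (p : ℕ) (A : Type*) [PreLieRing A] : Prop :=
  (∀ (l : List A) (b : A), l.length + 1 = (p - 1) / 4 → nestedMul l b ∈ pA p 1) ∧
  (∀ i : ℕ, 1 ≤ i → ∀ l : List A, l.length = (p - 1) / 4 →
    ∀ b ∈ ann p i, ∃ y ∈ ann p i, nestedMul l b = p • y)

end PreLieRing

namespace PreLieRing

variable {A : Type*} [PreLieRing A]

/-- Left multiplication as an additive hom. -/
def Lhom (a : A) : A →+ A := AddMonoidHom.mk' (mul a) (mul_add' a)

lemma mul_eq_Lhom (a x : A) : mul a x = Lhom a x := rfl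

lemma Lpow_succ' (a : A) (m : ℕ) (x : A) : Lpow a (m + 1) x = mul a (Lpow a m x) :=
  Function.iterate_succ_apply' _ m x

lemma Lpow_add (a : A) (m k : ℕ) (x : A) : Lpow a (m + k) x = Lpow a m (Lpow a k x) := by
  simpa [Lpow] using Function.iterate_add_apply (fun y => mul a y) m k x

lemma Lpow_nsmul (a : A) (m k : ℕ) (x : A) : Lpow a m (k • x) = k • Lpow a m x := by
  induction m with
  | zero => rfl
  | succ m ih => rw [Lpow_succ', Lpow_succ', ih, mul_eq_Lhom, map_nsmul, mul_eq_Lhom]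

lemma Lpow_sub (a : A) (m : ℕ) (x y : A) : Lpow a m (x - y) = Lpow a m x - Lpow a m y := by
  induction m with
  | zero => rfl
  | succ m ih =>
    rw [Lpow_succ', Lpow_succ', Lpow_succ', ih]
    exact map_sub (Lhom a) _ _

lemma Lpow_eq_nestedMul (a : A) (m : ℕ) (x : A) :
    Lpow a m x = nestedMul (List.replicate m a) x := by
  induction m with
  | zero => rfl
  | succ m ih => rw [Lpow_succ', ih, List.replicate_succ, nestedMul]

lemma pA_mono {p j k : ℕ} (hkj : k ≤ j) {x : A} (hx : x ∈ pA p j) : x ∈ pA p k := by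
  obtain ⟨y, hy⟩ := hx
  refine ⟨p ^ (j - k) • y, ?_⟩
  show p ^ k • p ^ (j - k) • y = x
  rw [smul_smul, ← pow_add, Nat.add_sub_cancel' hkj]
  exact hy

lemma Lpow_mem_pA {p j : ℕ} (a : A) (m : ℕ) {x : A} (hx : x ∈ pA p j) :
    Lpow a m x ∈ pA p j := by
  obtain ⟨y, hy⟩ := hx
  refine ⟨Lpow a m y, ?_⟩
  show p ^ j • Lpow a m y = Lpow a m x
  rw [← Lpow_nsmul]
  exact congrArg (Lpow a m) hy

end PreLieRing

namespace PreLieRing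

variable {A : Type*} [PreLieRing A]

lemma key {p : ℕ} (hP3 : Property3 p A) (ρ : A → A)
    (hρ1 : ∀ x : A, x ∈ pA p 1 → p • ρ x = x) (a : A) (i : ℕ) {b : A} (hb : b ∈ pA p 1) :
    Lpow a ((p - 1) / 4 + i) (ρ b) = Lpow a ((p - 1) / 4) (ρ (Lpow a i b)) := by
  set c := (p - 1) / 4 with hc
  have hbin : Lpow a i b ∈ pA p 1 := Lpow_mem_pA a i hb
  set e := Lpow a i (ρ b) - ρ (Lpow a i b) with he
  have hpe : p • e = 0 := by
    rw [he, smul_sub, ← Lpow_nsmul, hρ1 b hb, hρ1 _ hbin, sub_self]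
  have hann : e ∈ ann p 1 := by simp only [ann, Set.mem_setOf_eq, pow_one]; exact hpe
  obtain ⟨y, hy, hye⟩ :=
    hP3.2 1 le_rfl (List.replicate c a) List.length_replicate e hann
  have hy0 : p • y = 0 := by simpa [ann, pow_one] using hy
  have h0 : Lpow a c e = 0 := by rw [Lpow_eq_nestedMul, hye, hy0]
  have h1 : Lpow a c (Lpow a i (ρ b)) - Lpow a c (ρ (Lpow a i b)) = 0 := by
    rw [← Lpow_sub]; exact h0
  rw [Lpow_add]
  exact sub_eq_zero.mp h1

end PreLieRing

open PreLieRing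

theorem statement16 {A : Type*} [PreLieRing A] [Fintype A] (p n : ℕ) (hp : p.Prime)
    (hp3 : 3 < p) (hcard : Fintype.card A = p ^ n) (hP3 : Property3 p A)
    (ρ : A → A) (hρ1 : ∀ x : A, x ∈ pA p 1 → p • ρ x = x)
    (hρ2 : ∀ i : ℕ, 1 ≤ i → ∀ x : A, x ∈ pA p i → ρ x ∈ pA p (i - 1)) :
    ∀ i j : ℕ, 1 ≤ i → 1 ≤ j → ∀ a : A, ∀ b ∈ pA p j,
      Lpow a (((p - 1) / 4) * j + i) (ρ^[j] b)
        = Lpow a (((p - 1) / 4) * j) (ρ^[j] (Lpow a i b))  := by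
  have hp4 : p ≠ 4 := by intro h; rw [h] at hp; norm_num at hp
  have hc : 1 ≤ (p - 1) / 4 := by omega
  have main : ∀ j, 1 ≤ j → ∀ i, 1 ≤ i → ∀ a : A, ∀ b ∈ pA p j,
      Lpow a ((p - 1) / 4 * j + i) (ρ^[j] b) = Lpow a ((p - 1) / 4 * j) (ρ^[j] (Lpow a i b)) := by
    intro j hj
    induction j, hj using Nat.le_induction with
    | base =>
      intro i hi a b hb
      simpa [mul_one] using key hP3 ρ hρ1 a i hb
    | succ j hj ih =>
      intro i hi a b hb
      have hb1 : b ∈ pA p 1 := pA_mono (by omega) hb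
      have hρb : ρ b ∈ pA p j := by
        simpa using hρ2 (j + 1) (by omega) b hb
      have hLb : Lpow a i b ∈ pA p (j + 1) := Lpow_mem_pA a i hb
      have hρLb : ρ (Lpow a i b) ∈ pA p j := by
        simpa using hρ2 (j + 1) (by omega) _ hLb
      calc Lpow a ((p - 1) / 4 * (j + 1) + i) (ρ^[j + 1] b)
          = Lpow a ((p - 1) / 4 * j + ((p - 1) / 4 + i)) (ρ^[j] (ρ b)) := by
            rw [show (p - 1) / 4 * (j + 1) + i = (p - 1) / 4 * j + ((p - 1) / 4 + i) by ring,
              Function.iterate_succ_apply]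
        _ = Lpow a ((p - 1) / 4 * j) (ρ^[j] (Lpow a ((p - 1) / 4 + i) (ρ b))) := ih ((p - 1) / 4 + i) (by omega) a (ρ b) hρb
        _ = Lpow a ((p - 1) / 4 * j) (ρ^[j] (Lpow a ((p - 1) / 4) (ρ (Lpow a i b)))) := by
            rw [key hP3 ρ hρ1 a i hb1]
        _ = Lpow a ((p - 1) / 4 * j + (p - 1) / 4) (ρ^[j] (ρ (Lpow a i b))) := (ih ((p - 1) / 4) hc a _ hρLb).symm
        _ = Lpow a ((p - 1) / 4 * (j + 1)) (ρ^[j + 1] (Lpow a i b)) := by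
            rw [show (p - 1) / 4 * (j + 1) = (p - 1) / 4 * j + (p - 1) / 4 by ring, Function.iterate_succ_apply]
  intro i j hi hj a b hb
  exact main j hj i hi a b hb
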